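/- arXiv:2403.02696 — 3 statements merged into one kernel-verified Lean document; each statement's English description precedes it below -/
import Mathlib

section
/- Fix a > 2 and λ > 0, and define the SCAD concave component q : ℝ → ℝ by q(t) = 0 if |t| ≤ λ; q(t) = −(t² − 2λ|t| + λ²)/(2(a−1)) if λ < |t| ≤ aλ; and q(t) = (a+1)λ²/2 − λ|t| if |t| > aλ. Then q is differentiable on (0,∞) and for all t > t′ > 0 one has −(1/(a−1))(t − t′) ≤ q′(t) − q′(t′) ≤ 0. -/
/-!
On `t > 0` the function is `q(t) = -(φ(t - λ) - φ(t - aλ)) / (a - 1)` with `φ(s) = (s⁺)² / 2`.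
Since `φ` is differentiable with `φ' (s) = s⁺`, this gives `q'(t) = -r(t) / (a - 1)` where
`r(t) = (t - λ)⁺ - (t - aλ)⁺` is `t - λ` clamped to `[0, (a - 1)λ]`, a nondecreasing
`1`-Lipschitz function; both bounds follow.
-/

/-- The SCAD concave component `q_λ`. -/
noncomputable def scadQ (a lam : ℝ) : ℝ → ℝ := fun t =>
  if |t| ≤ lam then 0
  else if |t| ≤ a * lam then -(t ^ 2 - 2 * lam * |t| + lam ^ 2) / (2 * (a - 1))
  else (a + 1) * lam ^ 2 / 2 - lam * |t|

noncomputable def halfPosPartSq (s : ℝ) : ℝ := max s 0 ^ 2 / 2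

def rampDiff (u v x : ℝ) : ℝ := max (x - u) 0 - max (x - v) 0

theorem hasDerivAt_halfPosPartSq (x : ℝ) : HasDerivAt halfPosPartSq (max x 0) x := by
  refine hasDerivAt_of_hasDerivAt_of_ne' (g := fun s : ℝ => max s 0) (x := 0) (fun y hy => ?_)
    (by unfold halfPosPartSq; fun_prop) (by fun_prop) x
  rcases hy.lt_or_gt with hneg | hpos
  · rw [max_eq_right hneg.le]
    refine (hasDerivAt_const y (0 : ℝ)).congr_of_eventuallyEq ?_
    filter_upwards [Iio_mem_nhds hneg] with s hs
    simp [halfPosPartSq, max_eq_right (Set.mem_Iio.mp hs).le]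
  · rw [max_eq_left hpos.le]
    have hsq := (hasDerivAt_pow 2 y).div_const 2
    refine (hsq.congr_deriv (by ring)).congr_of_eventuallyEq ?_
    filter_upwards [Ioi_mem_nhds hpos] with s hs
    simp [halfPosPartSq, max_eq_left (Set.mem_Ioi.mp hs).le]

theorem rampDiff_monotone {u v : ℝ} (huv : u ≤ v) : Monotone (rampDiff u v) := by
  intro x y hxy
  simp only [rampDiff, max_def]
  split_ifs <;> linarith

theorem rampDiff_sub_le (u v : ℝ) {x y : ℝ} (hxy : x ≤ y) :
    rampDiff u v y - rampDiff u v x ≤ y - x := by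
  simp only [rampDiff, max_def]
  split_ifs <;> linarith

theorem scadQ_eq_of_pos {a lam t : ℝ} (ha : 1 < a) (hlam : 0 ≤ lam) (ht : 0 < t) :
    scadQ a lam t = -(halfPosPartSq (t - lam) - halfPosPartSq (t - a * lam)) / (a - 1) := by
  have hlt : lam ≤ a * lam := le_mul_of_one_le_left hlam ha.le
  have ha1 : a - 1 ≠ 0 := by linarith
  simp only [scadQ, halfPosPartSq, abs_of_pos ht]
  split_ifs with h₁ h₂
  · rw [max_eq_right (by linarith), max_eq_right (by linarith)]; ring
  · rw [max_eq_left (by linarith), max_eq_right (by linarith)]; field_simp; ring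
  · rw [max_eq_left (by linarith), max_eq_left (by linarith)]; field_simp; ring

theorem hasDerivAt_scadQ {a lam t : ℝ} (ha : 1 < a) (hlam : 0 ≤ lam) (ht : 0 < t) :
    HasDerivAt (scadQ a lam) (-rampDiff lam (a * lam) t / (a - 1)) t := by
  have hφ := ((hasDerivAt_halfPosPartSq (t - lam)).comp_sub_const t lam).sub
    ((hasDerivAt_halfPosPartSq (t - a * lam)).comp_sub_const t (a * lam))
  refine (hφ.neg.div_const (a - 1)).congr_of_eventuallyEq ?_
  filter_upwards [Ioi_mem_nhds ht] with s hs
  exact scadQ_eq_of_pos ha hlam hs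

/-- The SCAD concave component is differentiable on `(0,∞)` and its derivative is
nonincreasing, decreasing no faster than linearly with slope `1/(a-1)`. -/
theorem scadQ_deriv_bounds (a lam : ℝ) (ha : 2 < a) (hlam : 0 < lam) :
    (∀ t : ℝ, 0 < t → DifferentiableAt ℝ (scadQ a lam) t) ∧
    ∀ t t' : ℝ, 0 < t' → t' < t →
      -(1 / (a - 1)) * (t - t') ≤ deriv (scadQ a lam) t - deriv (scadQ a lam) t' ∧
      deriv (scadQ a lam) t - deriv (scadQ a lam) t' ≤ 0 := by
  have ha1 : 1 < a := by linarith
  have hpos : 0 < a - 1 := by linarith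
  refine ⟨fun t ht => (hasDerivAt_scadQ ha1 hlam.le ht).differentiableAt,
    fun t t' ht' htt => ?_⟩
  set r := rampDiff lam (a * lam)
  have hderiv : deriv (scadQ a lam) t - deriv (scadQ a lam) t' = -((r t - r t') / (a - 1)) := by
    rw [(hasDerivAt_scadQ ha1 hlam.le (ht'.trans htt)).deriv,
      (hasDerivAt_scadQ ha1 hlam.le ht').deriv]
    ring
  have hmono : 0 ≤ r t - r t' :=
    sub_nonneg.mpr (rampDiff_monotone (le_mul_of_one_le_left hlam.le ha1.le) htt.le)
  rw [hderiv, neg_mul, one_div_mul_eq_div]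
  exact ⟨neg_le_neg (div_le_div_of_nonneg_right (rampDiff_sub_le _ _ htt.le) hpos.le),
    neg_nonpos.mpr (div_nonneg hmono hpos.le)⟩
end

section
/- Let Θ* ∈ ℝ^{d₁×d₂} have a singular value decomposition Θ* = U* D* (V*)ᵀ with U* ∈ ℝ^{d₁×d₁} and V* ∈ ℝ^{d₂×d₂} orthogonal and D* the d₁×d₂ matrix carrying the singular values of Θ* in nonincreasing order on its diagonal. Fix an integer r with 1 ≤ r ≤ min(d₁,d₂), and let U^r and V^r be the matrices of the first r columns of U* and V* respectively. Then for every Δ ∈ ℝ^{d₁×d₂} there exist Δ′, Δ″ ∈ ℝ^{d₁×d₂} such that Δ = Δ′ + Δ″, rank(Δ′) ≤ 2r, (U^r)ᵀ Δ″ = 0, Δ″ V^r = 0, and ⟨⟨Δ′, Δ″⟩⟩ = 0. -/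
open Matrix Finset

noncomputable section

variable {d₁ d₂ : ℕ}

/-- Trace inner product `⟨⟨A,B⟩⟩ = trace(AᵀB)`. -/
def tinner (A B : Matrix (Fin d₁) (Fin d₂) ℝ) : ℝ := (Aᵀ * B).trace

/-- Frobenius norm. -/
def frobNorm (A : Matrix (Fin d₁) (Fin d₂) ℝ) : ℝ := Real.sqrt (∑ i, ∑ j, (A i j) ^ 2)

/-- The (unordered, zero-padded) singular values of `A`: the square roots of the
eigenvalues of `AᵀA`. -/
def svals (A : Matrix (Fin d₁) (Fin d₂) ℝ) : Fin d₂ → ℝ :=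
  fun j => Real.sqrt ((show (Aᵀ * A).IsHermitian by
    simpa [Matrix.conjTranspose_eq_transpose_of_trivial] using
      Matrix.isHermitian_conjTranspose_mul_self A).eigenvalues j)

/-- Nuclear norm: sum of singular values. -/
def nuclearNorm (A : Matrix (Fin d₁) (Fin d₂) ℝ) : ℝ := ∑ j, svals A j

/-- Operator norm: largest singular value. -/
def opNorm (A : Matrix (Fin d₁) (Fin d₂) ℝ) : ℝ := ⨆ j, svals A j

/-- The `d₁ × d₂` "diagonal" matrix whose diagonal entries are given by `s`. -/
def svdDiag (s : Fin (min d₁ d₂) → ℝ) : Matrix (Fin d₁) (Fin d₂) ℝ :=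
  Matrix.of fun i j =>
    if h : (i : ℕ) = (j : ℕ) then
      s ⟨(i : ℕ), by have := i.isLt; have := j.isLt; omega⟩ else 0

/-- `s` is the nonincreasing sequence of singular values of `A`, witnessed by a
singular value decomposition `A = U D Vᵀ` with `U, V` orthogonal. -/
def IsSVDOf (A : Matrix (Fin d₁) (Fin d₂) ℝ) (s : Fin (min d₁ d₂) → ℝ) : Prop :=
  Antitone s ∧ (∀ j, 0 ≤ s j) ∧
    ∃ (U : Matrix (Fin d₁) (Fin d₁) ℝ) (V : Matrix (Fin d₂) (Fin d₂) ℝ),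
      Uᵀ * U = 1 ∧ U * Uᵀ = 1 ∧ Vᵀ * V = 1 ∧ V * Vᵀ = 1 ∧ A = U * svdDiag s * Vᵀ

/-- Assumption 1 of the paper on the univariate regularizer `p = p_λ`,
with concave part `q_λ t = p t - λ * |t|`. -/
structure Assumption1 (p : ℝ → ℝ) (lam μ : ℝ) : Prop where
  zero : p 0 = 0
  even : ∀ t : ℝ, p (-t) = p t
  slope_anti : AntitoneOn (fun t => p t / t) (Set.Ioi (0 : ℝ))
  diffable : ∀ t : ℝ, t ≠ 0 → DifferentiableAt ℝ p t
  deriv_tendsto : Filter.Tendsto (deriv p) (nhdsWithin 0 (Set.Ioi 0)) (nhds lam)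
  mono : MonotoneOn p (Set.Ici (0 : ℝ))
  concave : ConcaveOn ℝ (Set.Ici (0 : ℝ)) p
  weakconv : ∀ t t' : ℝ, 0 < t' → t' < t →
    deriv (fun u => p u - lam * |u|) t - deriv (fun u => p u - lam * |u|) t' ≥ -μ * (t - t')

/-- The spectral regularizer `P_λ(Θ) = ∑ⱼ p_λ(σⱼ(Θ))`. -/
def Pl (p : ℝ → ℝ) (A : Matrix (Fin d₁) (Fin d₂) ℝ) : ℝ := ∑ j, p (svals A j)

end

/-!
The first `r` columns `P` of `U` and `Q` of `V` are orthonormal: `PᵀP = 1`, `QᵀQ = 1`. Take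
`Δ'' = (1 - PPᵀ) Δ (1 - QQᵀ)`: it is killed by `Pᵀ` on the left and by `Q` on the right, while
`Δ' = Δ - Δ'' = P (PᵀΔ) + ((1 - PPᵀ) Δ Q) Qᵀ` is a sum of two matrices of rank at most `r`,
the first orthogonal to `Δ''` because `PᵀΔ'' = 0`, the second because `Δ''Q = 0`.
-/

namespace Matrix

section Ring

variable {R : Type*} [Ring R] {m k : Type*} [Fintype m] [Fintype k] [DecidableEq m]
  [DecidableEq k] {A : Matrix m k R} {B : Matrix k m R}

theorem mul_one_sub_mul_eq_zero (h : B * A = 1) : B * (1 - A * B) = 0 := by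
  rw [Matrix.mul_sub, Matrix.mul_one, ← Matrix.mul_assoc, h, Matrix.one_mul, sub_self]

theorem one_sub_mul_mul_eq_zero (h : B * A = 1) : (1 - A * B) * A = 0 := by
  rw [Matrix.sub_mul, Matrix.one_mul, Matrix.mul_assoc, h, Matrix.mul_one, sub_self]

end Ring

section CommRing

variable {R : Type*} [CommRing R] {m n k l : Type*} [Fintype m]

theorem transpose_mul_submatrix_id_eq_one [DecidableEq n] [DecidableEq k] {U : Matrix m n R}
    (hU : Uᵀ * U = 1) {e : k → n} (he : Function.Injective e) :
    (U.submatrix id e)ᵀ * U.submatrix id e = 1 := by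
  rw [transpose_submatrix, ← submatrix_mul _ _ _ _ _ Function.bijective_id, hU,
    submatrix_one _ he]

theorem trace_transpose_mul_eq_zero [Fintype n] [Fintype k] [Fintype l] {P : Matrix m k R} {Q : Matrix n l R} {B : Matrix m n R}
    (hP : Pᵀ * B = 0) (hQ : B * Q = 0) (X : Matrix k n R) (Y : Matrix m l R) :
    ((P * X + Y * Qᵀ)ᵀ * B).trace = 0 := by
  rw [transpose_add, transpose_mul, transpose_mul, transpose_transpose, Matrix.add_mul,
    trace_add, Matrix.mul_assoc, hP, Matrix.mul_zero, Matrix.mul_assoc, trace_mul_comm,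
    Matrix.mul_assoc, hQ, Matrix.mul_zero, trace_zero, trace_zero, add_zero]

end CommRing

section Field

variable {K : Type*} [Field K] {m n k l : Type*} [Fintype n] [Fintype k]

theorem rank_add_le (A B : Matrix m n K) : (A + B).rank ≤ A.rank + B.rank := by
  have h : LinearMap.range (A + B).mulVecLin ≤
      LinearMap.range A.mulVecLin ⊔ LinearMap.range B.mulVecLin := by
    rintro x ⟨v, rfl⟩
    rw [mulVecLin_add]
    exact Submodule.add_mem_sup (LinearMap.mem_range_self _ v) (LinearMap.mem_range_self _ v)
  exact (Submodule.finrank_mono h).trans (Submodule.finrank_add_le_finrank_add_finrank _ _)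

theorem rank_mul_le_card_inner (A : Matrix m k K) (B : Matrix k n K) :
    (A * B).rank ≤ Fintype.card k :=
  (rank_mul_le_left A B).trans A.rank_le_card_width

theorem exists_add_rank_le_of_orthonormal_cols [Fintype m] [Fintype l] [DecidableEq m]
    [DecidableEq n] [DecidableEq k] [DecidableEq l] {P : Matrix m k K} {Q : Matrix n l K} (hP : Pᵀ * P = 1) (hQ : Qᵀ * Q = 1)
    (Δ : Matrix m n K) :
    ∃ Δ' Δ'' : Matrix m n K, Δ = Δ' + Δ'' ∧ Δ'.rank ≤ Fintype.card k + Fintype.card l ∧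
      Pᵀ * Δ'' = 0 ∧ Δ'' * Q = 0 ∧ (Δ'ᵀ * Δ'').trace = 0 := by
  have hPΔ'' : Pᵀ * ((1 - P * Pᵀ) * Δ * (1 - Q * Qᵀ)) = 0 := by
    rw [← Matrix.mul_assoc, ← Matrix.mul_assoc, mul_one_sub_mul_eq_zero hP, Matrix.zero_mul,
      Matrix.zero_mul]
  have hΔ''Q : (1 - P * Pᵀ) * Δ * (1 - Q * Qᵀ) * Q = 0 := by
    rw [Matrix.mul_assoc, one_sub_mul_mul_eq_zero hQ, Matrix.mul_zero]
  refine ⟨P * (Pᵀ * Δ) + (1 - P * Pᵀ) * Δ * Q * Qᵀ, (1 - P * Pᵀ) * Δ * (1 - Q * Qᵀ), ?_,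
    ?_, hPΔ'', hΔ''Q, trace_transpose_mul_eq_zero hPΔ'' hΔ''Q _ _⟩
  · simp only [Matrix.sub_mul, Matrix.mul_sub, Matrix.one_mul, Matrix.mul_one, Matrix.mul_assoc]
    abel
  · exact (rank_add_le _ _).trans
      (add_le_add (rank_mul_le_card_inner _ _) (rank_mul_le_card_inner _ _))

end Field

end Matrix

theorem error_matrix_decomposition_general {d₁ d₂ : ℕ}
    (U : Matrix (Fin d₁) (Fin d₁) ℝ) (V : Matrix (Fin d₂) (Fin d₂) ℝ)
    (hU : Uᵀ * U = 1) (hV : Vᵀ * V = 1)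
    (r : ℕ) (hr2 : r ≤ min d₁ d₂)
    (Δ : Matrix (Fin d₁) (Fin d₂) ℝ) :
    ∃ Δ' Δ'' : Matrix (Fin d₁) (Fin d₂) ℝ,
      Δ = Δ' + Δ'' ∧ Δ'.rank ≤ 2 * r ∧
      (Matrix.of fun (i : Fin d₁) (j : Fin r) =>
          U i ⟨(j : ℕ), lt_of_lt_of_le j.isLt (hr2.trans (min_le_left d₁ d₂))⟩)ᵀ * Δ'' = 0 ∧
      Δ'' * (Matrix.of fun (i : Fin d₂) (j : Fin r) =>
          V i ⟨(j : ℕ), lt_of_lt_of_le j.isLt (hr2.trans (min_le_right d₁ d₂))⟩) = 0 ∧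
      tinner Δ' Δ'' = 0 := by
  obtain ⟨Δ', Δ'', hsum, hrank, hUΔ'', hΔ''V, htrace⟩ :=
    exists_add_rank_le_of_orthonormal_cols
      (transpose_mul_submatrix_id_eq_one hU
        (Fin.castLE_injective (hr2.trans (min_le_left d₁ d₂))))
      (transpose_mul_submatrix_id_eq_one hV
        (Fin.castLE_injective (hr2.trans (min_le_right d₁ d₂)))) Δ
  exact ⟨Δ', Δ'', hsum, by simpa [two_mul] using hrank, hUΔ'', hΔ''V, htrace⟩

/-- Lemma 4(i): given an SVD `Θ* = U D Vᵀ` with singular values in nonincreasing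
order and `1 ≤ r ≤ min(d₁,d₂)`, any `Δ` decomposes as `Δ = Δ′ + Δ″` with
`rank Δ′ ≤ 2r`, the columns of `Δ″` orthogonal to the top-`r` left singular vectors,
the rows of `Δ″` orthogonal to the top-`r` right singular vectors, and
`⟨⟨Δ′, Δ″⟩⟩ = 0`. -/
theorem error_matrix_decomposition {d₁ d₂ : ℕ} (Θstar : Matrix (Fin d₁) (Fin d₂) ℝ)
    (U : Matrix (Fin d₁) (Fin d₁) ℝ) (V : Matrix (Fin d₂) (Fin d₂) ℝ)
    (hU : Uᵀ * U = 1) (hU' : U * Uᵀ = 1) (hV : Vᵀ * V = 1) (hV' : V * Vᵀ = 1)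
    (s : Fin (min d₁ d₂) → ℝ) (hanti : Antitone s) (hpos : ∀ j, 0 ≤ s j)
    (hsvd : Θstar = U * svdDiag s * Vᵀ)
    (r : ℕ) (hr1 : 1 ≤ r) (hr2 : r ≤ min d₁ d₂)
    (Δ : Matrix (Fin d₁) (Fin d₂) ℝ) :
    ∃ Δ' Δ'' : Matrix (Fin d₁) (Fin d₂) ℝ,
      Δ = Δ' + Δ'' ∧ Δ'.rank ≤ 2 * r ∧
      (Matrix.of fun (i : Fin d₁) (j : Fin r) =>
          U i ⟨(j : ℕ), lt_of_lt_of_le j.isLt (hr2.trans (min_le_left d₁ d₂))⟩)ᵀ * Δ'' = 0 ∧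
      Δ'' * (Matrix.of fun (i : Fin d₂) (j : Fin r) =>
          V i ⟨(j : ℕ), lt_of_lt_of_le j.isLt (hr2.trans (min_le_right d₁ d₂))⟩) = 0 ∧
      tinner Δ' Δ'' = 0 :=
  error_matrix_decomposition_general U V hU hV r hr2 Δ
end

section
/- Suppose p_λ satisfies Assumption 1 with parameters λ > 0 and μ ≥ 0, let P_λ(Θ) = ∑_j p_λ(σ_j(Θ)), and let L : ℝ^{d₁×d₂} → ℝ be differentiable with Taylor error satisfying T(Θ,Θ′) ≥ α₂‖Θ − Θ′‖_F² − τ₂‖Θ − Θ′‖_*² for all Θ, Θ′, with α₂ > 0 and τ₂ > 0. Let ω > 0, let Θ* and Θ satisfy ‖Θ*‖_* ≤ ω and ‖Θ‖_* ≤ ω, assume λ ≥ 4‖∇L(Θ*)‖_op and λ ≥ 8ωτ₂, and suppose Ψ(Θ) − Ψ(Θ*) ≤ δ for some δ ≥ 0, where Ψ = L + P_λ. Then P_λ(Θ) − P_λ(Θ*) ≤ (λ/2)‖Θ − Θ*‖_* + δ. -/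
open Matrix Finset

attribute [local instance] Matrix.frobeniusNormedAddCommGroup Matrix.frobeniusNormedSpace

/-!
With `Δ = Θ - Θ*`, the hypothesis on `Ψ` reduces the claim to `L(Θ*) - L(Θ) ≤ (λ/2)‖Δ‖_*`.
Restricted strong convexity at `(Θ, Θ*)` bounds `L(Θ*) - L(Θ)` by
`-⟨⟨∇L(Θ*), Δ⟩⟩ + τ₂‖Δ‖_*²`. The first term is at most `‖∇L(Θ*)‖_op ‖Δ‖_* ≤ (λ/4)‖Δ‖_*` by the
duality of the operator and nuclear norms; since `‖Δ‖_* ≤ 2ω`, the second is at most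
`2ωτ₂‖Δ‖_* ≤ (λ/4)‖Δ‖_*`.

The duality `tr(GᵀA) ≤ ‖G‖_op ‖A‖_*` comes from evaluating the trace in an orthonormal basis of
right singular vectors of `A`, and applying it to the polar factor of `A + B` gives the triangle
inequality for `‖·‖_*`.
-/

open scoped RealInnerProductSpace

lemma trace_transpose_mul_eq_sum_inner {m n ι : Type*} [Fintype m] [Fintype n] [DecidableEq n]
    [Fintype ι] (G A : Matrix m n ℝ) (b : OrthonormalBasis ι ℝ (EuclideanSpace ℝ n)) :
    (Gᵀ * A).trace = ∑ i, ⟪toEuclideanLin G (b i), toEuclideanLin A (b i)⟫ := by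
  classical
  have hlin : (Gᵀ * A).trace = LinearMap.trace ℝ _ (toEuclideanLin (Gᵀ * A)) := by
    rw [toEuclideanLin_eq_toLin_orthonormal, LinearMap.trace_eq_matrix_trace ℝ
      (EuclideanSpace.basisFun n ℝ).toBasis, LinearMap.toMatrix_toLin]
  rw [hlin, LinearMap.trace_eq_sum_inner _ b]
  refine Finset.sum_congr rfl fun i _ => ?_
  rw [← conjTranspose_eq_transpose_of_trivial, toLpLin_mul (q := 2), LinearMap.comp_apply,
    toEuclideanLin_conjTranspose_eq_adjoint, LinearMap.adjoint_inner_right, real_inner_comm]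

section

variable {d₁ d₂ : ℕ}

lemma isHermitian_transpose_mul_self (A : Matrix (Fin d₁) (Fin d₂) ℝ) : (Aᵀ * A).IsHermitian := by
  simpa [conjTranspose_eq_transpose_of_trivial] using isHermitian_conjTranspose_mul_self A

noncomputable def rightSingularBasis (A : Matrix (Fin d₁) (Fin d₂) ℝ) :
    OrthonormalBasis (Fin d₂) ℝ (EuclideanSpace ℝ (Fin d₂)) :=
  (isHermitian_transpose_mul_self A).eigenvectorBasis

section SingleMatrix

variable (A : Matrix (Fin d₁) (Fin d₂) ℝ)

lemma svals_nonneg (j : Fin d₂) : 0 ≤ svals A j := Real.sqrt_nonneg _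

lemma sq_svals (j : Fin d₂) :
    svals A j ^ 2 = (isHermitian_transpose_mul_self A).eigenvalues j := by
  refine Real.sq_sqrt ?_
  simpa [conjTranspose_eq_transpose_of_trivial] using eigenvalues_conjTranspose_mul_self_nonneg A j

lemma inner_toEuclideanLin_rightSingularBasis (x : EuclideanSpace ℝ (Fin d₂)) (j : Fin d₂) :
    ⟪toEuclideanLin A x, toEuclideanLin A (rightSingularBasis A j)⟫ =
      svals A j ^ 2 * ⟪x, rightSingularBasis A j⟫ := by
  rw [← LinearMap.adjoint_inner_right, ← toEuclideanLin_conjTranspose_eq_adjoint,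
    ← LinearMap.comp_apply, ← toLpLin_mul (q := 2), conjTranspose_eq_transpose_of_trivial,
    toLpLin_apply, rightSingularBasis, (isHermitian_transpose_mul_self A).mulVec_eigenvectorBasis,
    sq_svals]
  simp [inner_smul_right]

lemma norm_toEuclideanLin_rightSingularBasis (j : Fin d₂) :
    ‖toEuclideanLin A (rightSingularBasis A j)‖ = svals A j := by
  have h := inner_toEuclideanLin_rightSingularBasis A (rightSingularBasis A j) j
  rw [real_inner_self_eq_norm_sq, real_inner_self_eq_norm_sq, (rightSingularBasis A).norm_eq_one,
    one_pow, mul_one] at h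
  exact (sq_eq_sq₀ (norm_nonneg _) (svals_nonneg A j)).1 h

lemma norm_sq_toEuclideanLin (w : EuclideanSpace ℝ (Fin d₂)) :
    ‖toEuclideanLin A w‖ ^ 2 = ∑ j, svals A j ^ 2 * ⟪rightSingularBasis A j, w⟫ ^ 2 := by
  set v := rightSingularBasis A
  rw [← real_inner_self_eq_norm_sq]
  nth_rw 2 [← v.sum_repr' w]
  simp only [map_sum, map_smul, inner_sum, inner_smul_right, v,
    inner_toEuclideanLin_rightSingularBasis, real_inner_comm w]
  exact Finset.sum_congr rfl fun j _ => by ring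

lemma opNorm_nonneg : 0 ≤ opNorm A := Real.iSup_nonneg (svals_nonneg A)

lemma svals_le_opNorm (j : Fin d₂) : svals A j ≤ opNorm A :=
  le_ciSup (Set.finite_range _).bddAbove j

lemma norm_toEuclideanLin_le (w : EuclideanSpace ℝ (Fin d₂)) :
    ‖toEuclideanLin A w‖ ≤ opNorm A * ‖w‖ := by
  refine le_of_sq_le_sq ?_ (mul_nonneg (opNorm_nonneg A) (norm_nonneg w))
  rw [norm_sq_toEuclideanLin, mul_pow, ← (rightSingularBasis A).sum_sq_inner_right w,
    Finset.mul_sum]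
  gcongr with j
  · exact svals_nonneg A j
  · exact svals_le_opNorm A j

end SingleMatrix

lemma trace_transpose_mul_le_of_norm_le (G A : Matrix (Fin d₁) (Fin d₂) ℝ) {c : ℝ}
    (hG : ∀ w, ‖toEuclideanLin G w‖ ≤ c * ‖w‖) : (Gᵀ * A).trace ≤ c * nuclearNorm A := by
  set v := rightSingularBasis A
  rw [trace_transpose_mul_eq_sum_inner G A v, nuclearNorm, Finset.mul_sum]
  refine Finset.sum_le_sum fun j _ => (real_inner_le_norm _ _).trans ?_
  rw [norm_toEuclideanLin_rightSingularBasis]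
  simpa [v] using mul_le_mul_of_nonneg_right (hG (v j)) (svals_nonneg A j)

lemma tinner_le_opNorm_mul_nuclearNorm (G A : Matrix (Fin d₁) (Fin d₂) ℝ) :
    tinner G A ≤ opNorm G * nuclearNorm A :=
  trace_transpose_mul_le_of_norm_le G A (norm_toEuclideanLin_le G)

lemma exists_contraction_trace_transpose_mul_eq_nuclearNorm (A : Matrix (Fin d₁) (Fin d₂) ℝ) :
    ∃ G : Matrix (Fin d₁) (Fin d₂) ℝ,
      (∀ w, ‖toEuclideanLin G w‖ ≤ ‖w‖) ∧ (Gᵀ * A).trace = nuclearNorm A := by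
  set v := rightSingularBasis A
  -- `S = V Σ⁺ Vᵀ` (with `0⁻¹ = 0` on the kernel), so that `A S` is the polar factor of `A`.
  let S : EuclideanSpace ℝ (Fin d₂) →L[ℝ] EuclideanSpace ℝ (Fin d₂) :=
    ∑ j, (svals A j)⁻¹ • InnerProductSpace.rankOne ℝ (v j) (v j)
  have hS : ∀ j w, ⟪v j, S w⟫ = (svals A j)⁻¹ * ⟪v j, w⟫ := by
    intro j w
    simp [S, inner_sum, inner_smul_right, v.inner_eq_ite]
  refine ⟨toEuclideanLin.symm (toEuclideanLin A ∘ₗ S.toLinearMap), fun w => ?_, ?_⟩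
  · refine le_of_sq_le_sq ?_ (norm_nonneg w)
    rw [LinearEquiv.apply_symm_apply, LinearMap.comp_apply, norm_sq_toEuclideanLin,
      ← v.sum_sq_inner_right w]
    refine Finset.sum_le_sum fun j _ => ?_
    rw [ContinuousLinearMap.coe_coe, hS]
    rcases eq_or_ne (svals A j) 0 with h | h
    · simp [h, sq_nonneg]
    · rw [mul_pow, inv_pow, ← mul_assoc, mul_inv_cancel₀ (pow_ne_zero 2 h), one_mul]
  · rw [trace_transpose_mul_eq_sum_inner _ A v, nuclearNorm]
    refine Finset.sum_congr rfl fun j _ => ?_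
    rw [LinearEquiv.apply_symm_apply, LinearMap.comp_apply, ContinuousLinearMap.coe_coe,
      inner_toEuclideanLin_rightSingularBasis, real_inner_comm, hS, real_inner_self_eq_norm_sq,
      v.norm_eq_one, one_pow, mul_one, sq, mul_self_mul_inv]

lemma nuclearNorm_add_le (A B : Matrix (Fin d₁) (Fin d₂) ℝ) :
    nuclearNorm (A + B) ≤ nuclearNorm A + nuclearNorm B := by
  obtain ⟨G, hG, hGtrace⟩ := exists_contraction_trace_transpose_mul_eq_nuclearNorm (A + B)
  have hG' : ∀ w, ‖toEuclideanLin G w‖ ≤ 1 * ‖w‖ := fun w => (hG w).trans_eq (one_mul _).symm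
  calc nuclearNorm (A + B) = (Gᵀ * A).trace + (Gᵀ * B).trace := by
        rw [← hGtrace, Matrix.mul_add, trace_add]
    _ ≤ 1 * nuclearNorm A + 1 * nuclearNorm B :=
        add_le_add (trace_transpose_mul_le_of_norm_le G A hG')
          (trace_transpose_mul_le_of_norm_le G B hG')
    _ = nuclearNorm A + nuclearNorm B := by ring

lemma nuclearNorm_nonneg (A : Matrix (Fin d₁) (Fin d₂) ℝ) : 0 ≤ nuclearNorm A :=
  Finset.sum_nonneg fun j _ => svals_nonneg A j

lemma svals_neg (A : Matrix (Fin d₁) (Fin d₂) ℝ) : svals (-A) = svals A := by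
  have key : ∀ {X Y : Matrix (Fin d₂) (Fin d₂) ℝ} (hX : X.IsHermitian) (hY : Y.IsHermitian),
      X = Y → hX.eigenvalues = hY.eigenvalues := by
    rintro X _ hX hY rfl
    rfl
  unfold svals
  rw [key _ (isHermitian_transpose_mul_self A) (by simp)]

lemma nuclearNorm_neg (A : Matrix (Fin d₁) (Fin d₂) ℝ) : nuclearNorm (-A) = nuclearNorm A := by
  rw [nuclearNorm, nuclearNorm, svals_neg]

lemma nuclearNorm_sub_le (A B : Matrix (Fin d₁) (Fin d₂) ℝ) :
    nuclearNorm (A - B) ≤ nuclearNorm A + nuclearNorm B := by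
  simpa only [sub_eq_add_neg, nuclearNorm_neg] using nuclearNorm_add_le A (-B)

lemma tinner_neg (G A : Matrix (Fin d₁) (Fin d₂) ℝ) : tinner G (-A) = -tinner G A := by
  rw [tinner, tinner, Matrix.mul_neg, trace_neg]

end

theorem Pl_excess_bound_general {d₁ d₂ : ℕ}
    (lam ω α₂ τ₂ δ : ℝ)
    (hα : 0 < α₂) (hτ : 0 < τ₂)
    (p : ℝ → ℝ)
    (L : Matrix (Fin d₁) (Fin d₂) ℝ → ℝ)
    (gradL : Matrix (Fin d₁) (Fin d₂) ℝ → Matrix (Fin d₁) (Fin d₂) ℝ)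
    (hRSC : ∀ Θ Θ' : Matrix (Fin d₁) (Fin d₂) ℝ,
      L Θ - L Θ' - tinner (gradL Θ') (Θ - Θ') ≥
        α₂ * frobNorm (Θ - Θ') ^ 2 - τ₂ * nuclearNorm (Θ - Θ') ^ 2)
    (Θstar Θ : Matrix (Fin d₁) (Fin d₂) ℝ)
    (hfeas : nuclearNorm Θstar ≤ ω) (hfeas' : nuclearNorm Θ ≤ ω)
    (hlam1 : lam ≥ 4 * opNorm (gradL Θstar)) (hlam2 : lam ≥ 8 * ω * τ₂)
    (hΨ : (L Θ + Pl p Θ) - (L Θstar + Pl p Θstar) ≤ δ) :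
    Pl p Θ - Pl p Θstar ≤ lam / 2 * nuclearNorm (Θ - Θstar) + δ := by
  set Δ := Θ - Θstar
  have hΔ_nonneg : 0 ≤ nuclearNorm Δ := nuclearNorm_nonneg Δ
  have hΔ_le : nuclearNorm Δ ≤ 2 * ω := by linarith [nuclearNorm_sub_le Θ Θstar]
  have hgrad : -tinner (gradL Θstar) Δ ≤ lam / 4 * nuclearNorm Δ := by
    have h := tinner_le_opNorm_mul_nuclearNorm (gradL Θstar) (-Δ)
    rw [tinner_neg, nuclearNorm_neg] at h
    exact h.trans (by gcongr; linarith)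
  have hcurv : τ₂ * nuclearNorm Δ ^ 2 ≤ lam / 4 * nuclearNorm Δ :=
    calc τ₂ * nuclearNorm Δ ^ 2 = τ₂ * nuclearNorm Δ * nuclearNorm Δ := by ring
      _ ≤ τ₂ * (2 * ω) * nuclearNorm Δ := by gcongr
      _ ≤ lam / 4 * nuclearNorm Δ := by gcongr; linarith
  have hfrob : 0 ≤ α₂ * frobNorm Δ ^ 2 := by positivity
  linarith [hRSC Θ Θstar]

/-- The bound (lem-cone-claim) from the proof of Lemma 5: if `Ψ(Θ) - Ψ(Θ*) ≤ δ`
with `Ψ = L + P_λ`, then `P_λ(Θ) - P_λ(Θ*) ≤ (λ/2)‖Θ - Θ*‖_* + δ`. -/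
theorem Pl_excess_bound {d₁ d₂ : ℕ}
    (lam μ ω α₂ τ₂ δ : ℝ)
    (hlam : 0 < lam) (hμ : 0 ≤ μ) (hω : 0 < ω) (hα : 0 < α₂) (hτ : 0 < τ₂) (hδ : 0 ≤ δ)
    (p : ℝ → ℝ) (hp : Assumption1 p lam μ)
    (L : Matrix (Fin d₁) (Fin d₂) ℝ → ℝ)
    (gradL : Matrix (Fin d₁) (Fin d₂) ℝ → Matrix (Fin d₁) (Fin d₂) ℝ)
    (hdiff : Differentiable ℝ L)
    (hgrad : ∀ Θ Δ : Matrix (Fin d₁) (Fin d₂) ℝ, fderiv ℝ L Θ Δ = tinner (gradL Θ) Δ)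
    (hRSC : ∀ Θ Θ' : Matrix (Fin d₁) (Fin d₂) ℝ,
      L Θ - L Θ' - tinner (gradL Θ') (Θ - Θ') ≥
        α₂ * frobNorm (Θ - Θ') ^ 2 - τ₂ * nuclearNorm (Θ - Θ') ^ 2)
    (Θstar Θ : Matrix (Fin d₁) (Fin d₂) ℝ)
    (hfeas : nuclearNorm Θstar ≤ ω) (hfeas' : nuclearNorm Θ ≤ ω)
    (hlam1 : lam ≥ 4 * opNorm (gradL Θstar)) (hlam2 : lam ≥ 8 * ω * τ₂)
    (hΨ : (L Θ + Pl p Θ) - (L Θstar + Pl p Θstar) ≤ δ) :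
    Pl p Θ - Pl p Θstar ≤ lam / 2 * nuclearNorm (Θ - Θstar) + δ :=
  Pl_excess_bound_general lam ω α₂ τ₂ δ hα hτ p L gradL hRSC Θstar Θ hfeas hfeas' hlam1 hlam2 hΨ
end
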